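/- Lemma 3, Case 1: let a, b, c be distinct non-root nodes such that a is a descendant of b and b is a descendant of c. Then W_ε(a,b) < W_ε(a,c). -/
import Mathlib


open Finset
open Classical

/-- A finite rooted tree, encoded by its root and parent map: every node reaches
the root by iterating `parent`, and the root is a fixed point of `parent`.
Each non-root node `v` is identified with the edge `(v, parent v)`, so that
edge weights are functions on non-root nodes. -/
structure DistTree (V : Type) [Fintype V] [DecidableEq V] where
  root : V
  parent : V → V
  parent_root : parent root = root
  reaches_root : ∀ v : V, ∃ n : ℕ, parent^[n] v = root

namespace DistTree

variable {V : Type} [Fintype V] [DecidableEq V]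

/-- `a` is a descendant of `b` (i.e. `a ∈ D_b`): `b` lies on the path from `a`
to the root.  Every node is a descendant of itself. -/
def Desc (T : DistTree V) (a b : V) : Prop := ∃ n : ℕ, T.parent^[n] a = b

/-- `b` is the parent of the (non-root) node `a`: `(a,b)` is an edge of the tree
and `b` lies on the path from `a` to the root. -/
def IsParent (T : DistTree V) (b a : V) : Prop := a ≠ T.root ∧ T.parent a = b

/-- `T.pathSum w a b = Σ_{e ∈ P(a) ∩ P(b)} w_e` : the sum of the edge weights `w`
over the edges common to the path from `a` to the root and the path from `b` to
the root.  An edge `(v, parent v)` (indexed by the non-root node `v`) lies on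
`P(a)` iff `a` is a descendant of `v`. -/
noncomputable def pathSum (T : DistTree V) (w : V → ℝ) (a b : V) : ℝ :=
  ∑ v : V, if v ≠ T.root ∧ T.Desc a v ∧ T.Desc b v then w v else 0

end DistTree

/-- `W_ε(a,b) := Σ_{c ≠ 0} [(R(a,c)−R(b,c))² σp(c) + (X(a,c)−X(b,c))² σq(c)
+ 2 (R(a,c)−R(b,c)) (X(a,c)−X(b,c)) σpq(c)]`: the expected squared centered
difference of voltage-magnitude deviations between `a` and `b` (LC-PF model). -/
noncomputable def Weps {V : Type} [Fintype V] [DecidableEq V]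
    (T : DistTree V) (r x σp σq σpq : V → ℝ) (a b : V) : ℝ :=
  ∑ c : V, if c ≠ T.root then
      (T.pathSum r a c - T.pathSum r b c) ^ 2 * σp c
        + (T.pathSum x a c - T.pathSum x b c) ^ 2 * σq c
        + 2 * (T.pathSum r a c - T.pathSum r b c)
            * (T.pathSum x a c - T.pathSum x b c) * σpq c
    else 0

/-- `W_θ(a,b) := Σ_{c ≠ 0} [(X(a,c)−X(b,c))² σp(c) + (R(a,c)−R(b,c))² σq(c)
− 2 (R(a,c)−R(b,c)) (X(a,c)−X(b,c)) σpq(c)]`: the expected squared centered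
difference of voltage phase angles between `a` and `b` (LC-PF model). -/
noncomputable def Wtheta {V : Type} [Fintype V] [DecidableEq V]
    (T : DistTree V) (r x σp σq σpq : V → ℝ) (a b : V) : ℝ :=
  ∑ c : V, if c ≠ T.root then
      (T.pathSum x a c - T.pathSum x b c) ^ 2 * σp c
        + (T.pathSum r a c - T.pathSum r b c) ^ 2 * σq c
        - 2 * (T.pathSum r a c - T.pathSum r b c)
            * (T.pathSum x a c - T.pathSum x b c) * σpq c
    else 0

/-- `W_{εθ}(a,b) := Σ_{c ≠ 0} [(R(a,c)−R(b,c)) (X(a,c)−X(b,c)) (σp(c) − σq(c))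
+ ((X(a,c)−X(b,c))² − (R(a,c)−R(b,c))²) σpq(c)]`: the expected product of the
centered differences of voltage-magnitude deviations and phase angles between
`a` and `b` (LC-PF model). -/
noncomputable def WepsTheta {V : Type} [Fintype V] [DecidableEq V]
    (T : DistTree V) (r x σp σq σpq : V → ℝ) (a b : V) : ℝ :=
  ∑ c : V, if c ≠ T.root then
      (T.pathSum r a c - T.pathSum r b c) * (T.pathSum x a c - T.pathSum x b c)
          * (σp c - σq c)
        + ((T.pathSum x a c - T.pathSum x b c) ^ 2
            - (T.pathSum r a c - T.pathSum r b c) ^ 2) * σpq c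
    else 0

section AuxLemmas

variable {V : Type} [Fintype V] [DecidableEq V] (T : DistTree V)

lemma aux_desc_refl (a : V) : T.Desc a a := ⟨0, rfl⟩

lemma aux_desc_trans {a b v : V} (h1 : T.Desc a b) (h2 : T.Desc b v) :
    T.Desc a v := by
  obtain ⟨n, hn⟩ := h1
  obtain ⟨m, hm⟩ := h2
  exact ⟨m + n, by rw [Function.iterate_add_apply, hn, hm]⟩

lemma aux_not_desc {b c : V} (hb : b ≠ T.root) (hbc : b ≠ c) (h : T.Desc b c) :
    ¬ T.Desc c b := by
  rintro ⟨m, hm⟩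
  obtain ⟨n, hn⟩ := h
  have hn0 : n ≠ 0 := by
    rintro rfl
    exact hbc hn
  have hpos : 0 < m + n := by omega
  have hloop : T.parent^[m + n] b = b := by
    rw [Function.iterate_add_apply, hn, hm]
  have hloopt : ∀ t : ℕ, T.parent^[(m + n) * t] b = b := by
    intro t
    induction t with
    | zero => simp
    | succ t ih =>
      rw [Nat.mul_succ, Function.iterate_add_apply, hloop, ih]
  obtain ⟨N, hN⟩ := T.reaches_root b
  have hKN : N ≤ (m + n) * N := Nat.le_mul_of_pos_left N hpos
  have hkey : T.parent^[(m + n) * N] b = T.root := by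
    have hsplit : (m + n) * N = ((m + n) * N - N) + N := (Nat.sub_add_cancel hKN).symm
    rw [hsplit, Function.iterate_add_apply, hN,
      Function.iterate_fixed T.parent_root]
  exact hb ((hloopt N).symm.trans hkey)

lemma aux_pathSum_mono (w : V → ℝ) (hw : ∀ v, v ≠ T.root → 0 ≤ w v)
    {b c : V} (h : T.Desc b c) (d : V) :
    T.pathSum w c d ≤ T.pathSum w b d := by
  unfold DistTree.pathSum
  apply Finset.sum_le_sum
  intro v _
  by_cases h1 : v ≠ T.root ∧ T.Desc c v ∧ T.Desc d v
  · rw [if_pos h1, if_pos ⟨h1.1, aux_desc_trans T h h1.2.1, h1.2.2⟩]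
  · rw [if_neg h1]
    by_cases h2 : v ≠ T.root ∧ T.Desc b v ∧ T.Desc d v
    · rw [if_pos h2]; exact hw v h2.1
    · rw [if_neg h2]

lemma aux_pathSum_lt (w : V → ℝ) (hw : ∀ v, v ≠ T.root → 0 < w v)
    {a b c : V} (hb : b ≠ T.root) (hbc : b ≠ c)
    (hdab : T.Desc a b) (hdbc : T.Desc b c) :
    T.pathSum w c a < T.pathSum w b a := by
  unfold DistTree.pathSum
  apply Finset.sum_lt_sum
  · intro v _
    by_cases h1 : v ≠ T.root ∧ T.Desc c v ∧ T.Desc a v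
    · rw [if_pos h1, if_pos ⟨h1.1, aux_desc_trans T hdbc h1.2.1, h1.2.2⟩]
    · rw [if_neg h1]
      by_cases h2 : v ≠ T.root ∧ T.Desc b v ∧ T.Desc a v
      · rw [if_pos h2]; exact le_of_lt (hw v h2.1)
      · rw [if_neg h2]
  · refine ⟨b, Finset.mem_univ b, ?_⟩
    rw [if_neg, if_pos ⟨hb, aux_desc_refl T b, hdab⟩]
    · exact hw b hb
    · rintro ⟨_, hcb, _⟩
      exact aux_not_desc T hb hbc hdbc hcb

lemma aux_quad_le {u u' v v' p q s : ℝ} (hu : 0 ≤ u) (huu : u ≤ u')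
    (hv : 0 ≤ v) (hvv : v ≤ v') (hp : 0 ≤ p) (hq : 0 ≤ q) (hs : 0 ≤ s) :
    u ^ 2 * p + v ^ 2 * q + 2 * u * v * s ≤
      u' ^ 2 * p + v' ^ 2 * q + 2 * u' * v' * s := by
  have h1 : u ^ 2 ≤ u' ^ 2 := by nlinarith
  have h2 : v ^ 2 ≤ v' ^ 2 := by nlinarith
  have h3 : u * v ≤ u' * v' := by nlinarith
  nlinarith

lemma aux_quad_lt {u u' v v' p q s : ℝ} (hu : 0 ≤ u) (huu : u < u')
    (hv : 0 ≤ v) (hvv : v < v') (hp : 0 < p) (hq : 0 < q) (hs : 0 < s) :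
    u ^ 2 * p + v ^ 2 * q + 2 * u * v * s <
      u' ^ 2 * p + v' ^ 2 * q + 2 * u' * v' * s := by
  have h1 : u ^ 2 < u' ^ 2 := by nlinarith
  have h2 : v ^ 2 < v' ^ 2 := by nlinarith
  have h3 : u * v < u' * v' := by nlinarith
  nlinarith

end AuxLemmas

/-- **Lemma 3, Case 1.** If `a`, `b`, `c` are distinct non-root
nodes such that `a` is a descendant of `b` and `b` is a descendant of `c`, then
`W_ε(a,b) < W_ε(a,c)`. -/
theorem Weps_case1 {V : Type} [Fintype V] [DecidableEq V]
    (T : DistTree V) (r x σp σq σpq : V → ℝ)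
    (hr : ∀ v, v ≠ T.root → 0 < r v) (hx : ∀ v, v ≠ T.root → 0 < x v)
    (hσp : ∀ v, v ≠ T.root → 0 < σp v) (hσq : ∀ v, v ≠ T.root → 0 < σq v)
    (hσpq : ∀ v, v ≠ T.root → 0 < σpq v)
    (a b c : V) (ha : a ≠ T.root) (hb : b ≠ T.root) (hc : c ≠ T.root)
    (hab : a ≠ b) (hbc : b ≠ c) (hac : a ≠ c)
    (hdab : T.Desc a b) (hdbc : T.Desc b c) :
    Weps T r x σp σq σpq a b < Weps T r x σp σq σpq a c := by
  have hr' : ∀ v, v ≠ T.root → 0 ≤ r v := fun v hv => le_of_lt (hr v hv)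
  have hx' : ∀ v, v ≠ T.root → 0 ≤ x v := fun v hv => le_of_lt (hx v hv)
  unfold Weps
  apply Finset.sum_lt_sum
  · intro d _
    by_cases hd : d ≠ T.root
    · rw [if_pos hd, if_pos hd]
      exact aux_quad_le
        (sub_nonneg.2 (aux_pathSum_mono T r hr' hdab d))
        (sub_le_sub_left (aux_pathSum_mono T r hr' hdbc d) _)
        (sub_nonneg.2 (aux_pathSum_mono T x hx' hdab d))
        (sub_le_sub_left (aux_pathSum_mono T x hx' hdbc d) _)
        (le_of_lt (hσp d hd)) (le_of_lt (hσq d hd)) (le_of_lt (hσpq d hd))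
    · rw [if_neg hd, if_neg hd]
  · refine ⟨a, Finset.mem_univ a, ?_⟩
    rw [if_pos ha, if_pos ha]
    exact aux_quad_lt
      (sub_nonneg.2 (aux_pathSum_mono T r hr' hdab a))
      (sub_lt_sub_left (aux_pathSum_lt T r hr hb hbc hdab hdbc) _)
      (sub_nonneg.2 (aux_pathSum_mono T x hx' hdab a))
      (sub_lt_sub_left (aux_pathSum_lt T x hx hb hbc hdab hdbc) _)
      (hσp a ha) (hσq a ha) (hσpq a ha)
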